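/- arXiv:cs/9911014 — 4 statements merged into one kernel-verified Lean document; each statement's English description precedes it below -/
import Mathlib

section
/- Every modal formula φ of the language L that is satisfiable with respect to the class F≤1 of frames in which every world has at most one successor is satisfied in a model based on a frame in F≤1 having at most md(φ)+1 worlds (a finite linear chain of length at most md(φ)). -/
namespace PoorMansModal

/-- Modal formulas over propositional variables of type `α`: variables `p`,
negated variables `p̄`, general negation, conjunction, disjunction, box, diamond,
and the constants `true` and `false`. -/
inductive Fml (α : Type) : Type where
  | var : α → Fml α
  | nvar : α → Fml α
  | neg : Fml α → Fml α
  | and : Fml α → Fml α → Fml α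
  | or : Fml α → Fml α → Fml α
  | box : Fml α → Fml α
  | dia : Fml α → Fml α
  | tru : Fml α
  | fls : Fml α

/-- A Kripke model: a nonempty set of worlds, an accessibility relation, and a valuation. -/
structure Kripke (α : Type) where
  World : Type
  nonempty : Nonempty World
  R : World → World → Prop
  V : α → World → Prop

/-- Truth of a formula at a world of a model. -/
def Sat {α : Type} (M : Kripke α) : Fml α → M.World → Prop
  | .var p, w => M.V p w
  | .nvar p, w => ¬ M.V p w
  | .neg φ, w => ¬ Sat M φ w
  | .and φ ψ, w => Sat M φ w ∧ Sat M ψ w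
  | .or φ ψ, w => Sat M φ w ∨ Sat M ψ w
  | .box φ, w => ∀ v, M.R w v → Sat M φ v
  | .dia φ, w => ∃ v, M.R w v ∧ Sat M φ v
  | .tru, _ => True
  | .fls, _ => False

/-- Modal depth: depth of nesting of `□` and `◇`. -/
def mdep {α : Type} : Fml α → ℕ
  | .var _ => 0
  | .nvar _ => 0
  | .neg φ => mdep φ
  | .and φ ψ => max (mdep φ) (mdep ψ)
  | .or φ ψ => max (mdep φ) (mdep ψ)
  | .box φ => mdep φ + 1
  | .dia φ => mdep φ + 1
  | .tru => 0
  | .fls => 0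

/-- Conjunction of a list of formulas; the empty conjunction is the always-true formula. -/
def bigConj {α : Type} : List (Fml α) → Fml α
  | [] => .tru
  | [φ] => φ
  | φ :: rest => .and φ (bigConj rest)

/-- `□^k φ`. -/
def boxI {α : Type} : ℕ → Fml α → Fml α
  | 0, φ => φ
  | k + 1, φ => .box (boxI k φ)

/-- `◇^k φ`. -/
def diaI {α : Type} : ℕ → Fml α → Fml α
  | 0, φ => φ
  | k + 1, φ => .dia (diaI k φ)

/-- `(◇□)^k φ`. -/
def diaBoxI {α : Type} : ℕ → Fml α → Fml α
  | 0, φ => φ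
  | k + 1, φ => .dia (.box (diaBoxI k φ))

/-- The literal with variable `l.1` and sign `l.2` (`true` = positive). -/
def litF {α : Type} (l : α × Bool) : Fml α := if l.2 then .var l.1 else .nvar l.1

/-- The variable `p` occurs in the formula. -/
def occursV {α : Type} (p : α) : Fml α → Prop
  | .var q => p = q
  | .nvar q => p = q
  | .neg φ => occursV p φ
  | .and φ ψ => occursV p φ ∨ occursV p ψ
  | .or φ ψ => occursV p φ ∨ occursV p ψ
  | .box φ => occursV p φ
  | .dia φ => occursV p φ
  | .tru => False
  | .fls => False

/-- Poor man's formulas: built from literals, `∧`, `□`, `◇` only. -/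
def PoorF {α : Type} : Fml α → Prop
  | .var _ => True
  | .nvar _ => True
  | .and φ ψ => PoorF φ ∧ PoorF ψ
  | .box φ => PoorF φ
  | .dia φ => PoorF φ
  | _ => False

/-- Formulas of the language `L`: built from literals, `∧`, `∨`, `□`, `◇`. -/
def InL {α : Type} : Fml α → Prop
  | .var _ => True
  | .nvar _ => True
  | .and φ ψ => InL φ ∧ InL ψ
  | .or φ ψ => InL φ ∧ InL ψ
  | .box φ => InL φ
  | .dia φ => InL φ
  | _ => False

/-- Every world has at most one successor. -/
def AtMostOne {W : Type} (R : W → W → Prop) : Prop :=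
  ∀ w v v', R w v → R w v' → v = v'

/-- Every world has at least one successor. -/
def AtLeastOne {W : Type} (R : W → W → Prop) : Prop :=
  ∀ w, ∃ v, R w v

/-- Every world has at most two successors. -/
def AtMostTwo {W : Type} (R : W → W → Prop) : Prop :=
  ∀ w v₁ v₂ v₃, R w v₁ → R w v₂ → R w v₃ → v₁ = v₂ ∨ v₁ = v₃ ∨ v₂ = v₃

/-- `chainR R n w v`: there is an `R`-path of length exactly `n` from `w` to `v`. -/
def chainR {W : Type} (R : W → W → Prop) : ℕ → W → W → Prop
  | 0, w, v => w = v
  | k + 1, w, v => ∃ u, R w u ∧ chainR R k u v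

/-- `R` is the parent-child relation of a rooted tree with root `root`
in which every node has at most two children. -/
structure IsBinTree {W : Type} (R : W → W → Prop) (root : W) : Prop where
  reach : ∀ w, Relation.ReflTransGen R root w
  root_no_parent : ∀ w, ¬ R w root
  unique_parent : ∀ w v v', R v w → R v' w → v = v'
  acyclic : ∀ w, ¬ Relation.TransGen R w w
  at_most_two_children : ∀ w v₁ v₂ v₃, R w v₁ → R w v₂ → R w v₃ → v₁ = v₂ ∨ v₁ = v₃ ∨ v₂ = v₃

/-- `φ_exp = ⋀_{i=1}^n □^{i-1}(◇□^{n-i} p_i ∧ ◇□^{n-i} p̄_i)`, with `p_i = var i`. -/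
def phiExp (n : ℕ) : Fml ℕ :=
  bigConj ((List.range n).map (fun j =>
    boxI j (.and (.dia (boxI (n - 1 - j) (.var (j + 1))))
                 (.dia (boxI (n - 1 - j) (.nvar (j + 1)))))))

/-- Satisfiability with respect to the class of all frames. -/
def SatAll (φ : Fml ℕ) : Prop := ∃ (M : Kripke ℕ) (w : M.World), Sat M φ w

/-- Satisfiability with respect to `F≤1`. -/
def SatLe1 (φ : Fml ℕ) : Prop := ∃ M : Kripke ℕ, AtMostOne M.R ∧ ∃ w, Sat M φ w

/-- Satisfiability with respect to `F≥1`. -/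
def SatGe1 (φ : Fml ℕ) : Prop := ∃ M : Kripke ℕ, AtLeastOne M.R ∧ ∃ w, Sat M φ w

/-- Satisfiability with respect to `F≤2`. -/
def SatLe2 (φ : Fml ℕ) : Prop := ∃ M : Kripke ℕ, AtMostTwo M.R ∧ ∃ w, Sat M φ w

/-- A one-world model with no successors, realizing the boolean assignment `v`;
truth at its world is propositional truth for formulas without modal operators. -/
def propModel (v : ℕ → Bool) : Kripke ℕ :=
  { World := Unit, nonempty := ⟨()⟩, R := fun _ _ => False, V := fun p _ => v p = true }

/-- Propositional satisfaction of `φ` under the assignment `v`. -/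
def PropSat (v : ℕ → Bool) (φ : Fml ℕ) : Prop := Sat (propModel v) φ ()

/-!
In a frame of `F≤1` the worlds reachable from `w` lie on a single path `w = u₀ → u₁ → ⋯`
(possibly finite, possibly revisiting worlds). A formula of modal depth `d` evaluated at `uᵢ`
only inspects `uᵢ, …, u_{i+d}`, so copying the first `md(φ) + 1` positions of the path onto
the chain `0 → 1 → ⋯ → md(φ)` preserves the truth of every formula of depth at most `md(φ)`.
Indexing by positions rather than by worlds unravels any cycle.
-/

section Chain

variable {W : Type} {R : W → W → Prop}

lemma chainR_succ_iff {k : ℕ} {w u : W} :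
    chainR R (k + 1) w u ↔ ∃ x, chainR R k w x ∧ R x u := by
  induction k generalizing w with
  | zero => simp [chainR]
  | succ k ih =>
    constructor
    · rintro ⟨y, hwy, hyu⟩
      obtain ⟨x, hyx, hxu⟩ := ih.1 hyu
      exact ⟨x, ⟨y, hwy, hyx⟩, hxu⟩
    · rintro ⟨x, ⟨y, hwy, hyx⟩, hxu⟩
      exact ⟨y, hwy, ih.2 ⟨x, hyx, hxu⟩⟩

lemma AtMostOne.chainR_unique (hR : AtMostOne R) {k : ℕ} {w u v : W}
    (hu : chainR R k w u) (hv : chainR R k w v) : u = v := by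
  induction k generalizing w with
  | zero => exact hu.symm.trans hv
  | succ k ih =>
    obtain ⟨x, hwx, hxu⟩ := hu
    obtain ⟨y, hwy, hyv⟩ := hv
    cases hR w x y hwx hwy
    exact ih hxu hyv

lemma AtMostOne.chainR_succ_iff (hR : AtMostOne R) {k : ℕ} {w v u : W}
    (hv : chainR R k w v) : chainR R (k + 1) w u ↔ R v u := by
  rw [PoorMansModal.chainR_succ_iff]
  exact ⟨fun ⟨x, hx, hxu⟩ => hR.chainR_unique hv hx ▸ hxu, fun hvu => ⟨v, hv, hvu⟩⟩

end Chain

/-- Position `i` of the chain stands for the world reached from `w` in `i` steps; the edge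
`i → i + 1` is present only when such a world exists. -/
def chainModel {α : Type} (M : Kripke α) (w : M.World) (n : ℕ) : Kripke α where
  World := Fin (n + 1)
  nonempty := ⟨0⟩
  R i j := (j : ℕ) = i + 1 ∧ ∃ u, chainR M.R j w u
  V p i := ∃ u, chainR M.R i w u ∧ M.V p u

section ChainModel

variable {α : Type} {M : Kripke α} {w : M.World} {n : ℕ}

lemma chainModel_V_iff (hR : AtMostOne M.R) {p : α} {i : Fin (n + 1)} {v : M.World}
    (hv : chainR M.R i w v) : (chainModel M w n).V p i ↔ M.V p v :=
  ⟨fun ⟨_, hu, hp⟩ => hR.chainR_unique hu hv ▸ hp, fun hp => ⟨v, hv, hp⟩⟩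

lemma atMostOne_chainModel : AtMostOne (chainModel M w n).R :=
  fun _ _ _ hj hj' => Fin.ext (hj.1.trans hj'.1.symm)

theorem sat_chainModel_iff (hR : AtMostOne M.R) {ψ : Fml α} {i : Fin (n + 1)} {v : M.World}
    (hd : i + mdep ψ ≤ n) (hv : chainR M.R i w v) :
    Sat (chainModel M w n) ψ i ↔ Sat M ψ v := by
  induction ψ generalizing i v with
  | var p => exact chainModel_V_iff hR hv
  | nvar p => exact not_congr (chainModel_V_iff hR hv)
  | neg ψ ih => exact not_congr (ih hd hv)
  | and ψ χ ihψ ihχ =>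
    simp only [mdep] at hd
    exact and_congr (ihψ (by omega) hv) (ihχ (by omega) hv)
  | or ψ χ ihψ ihχ =>
    simp only [mdep] at hd
    exact or_congr (ihψ (by omega) hv) (ihχ (by omega) hv)
  | box ψ ih =>
    simp only [mdep] at hd
    have hi : (i : ℕ) + 1 < n + 1 := by omega
    constructor
    · intro h u hvu
      have hu := (hR.chainR_succ_iff hv).2 hvu
      exact (ih (i := ⟨i + 1, hi⟩) (by simp only; omega) hu).1 (h _ ⟨rfl, u, hu⟩)
    · rintro h j ⟨hj, u, hu⟩
      exact (ih (by omega) hu).2 (h u ((hR.chainR_succ_iff hv).1 (hj ▸ hu)))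
  | dia ψ ih =>
    simp only [mdep] at hd
    have hi : (i : ℕ) + 1 < n + 1 := by omega
    constructor
    · rintro ⟨j, ⟨hj, u, hu⟩, hψ⟩
      exact ⟨u, (hR.chainR_succ_iff hv).1 (hj ▸ hu), (ih (by omega) hu).1 hψ⟩
    · rintro ⟨u, hvu, hψ⟩
      have hu := (hR.chainR_succ_iff hv).2 hvu
      exact ⟨⟨i + 1, hi⟩, ⟨rfl, u, hu⟩, (ih (i := ⟨i + 1, hi⟩) (by simp only; omega) hu).2 hψ⟩
  | tru | fls => exact Iff.rfl

end ChainModel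

theorem stmt0_general (φ : Fml ℕ)
    (hsat : ∃ M : Kripke ℕ, AtMostOne M.R ∧ ∃ w, Sat M φ w) :
    ∃ M : Kripke ℕ, AtMostOne M.R ∧ Finite M.World ∧ Nat.card M.World ≤ mdep φ + 1 ∧
      ∃ w, Sat M φ w := by
  obtain ⟨M, hR, w, hw⟩ := hsat
  refine ⟨chainModel M w (mdep φ), atMostOne_chainModel, Finite.of_fintype (Fin _),
    (Nat.card_fin _).le, (0 : Fin (mdep φ + 1)), ?_⟩
  exact (sat_chainModel_iff hR (i := 0) (by simp) (by simp [chainR])).2 hw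

/-- Every `L` formula satisfiable with respect to `F≤1` is satisfied in a
model based on a frame in `F≤1` having at most `md(φ) + 1` worlds. -/
theorem stmt0 (φ : Fml ℕ) (hφ : InL φ)
    (hsat : ∃ M : Kripke ℕ, AtMostOne M.R ∧ ∃ w, Sat M φ w) :
    ∃ M : Kripke ℕ, AtMostOne M.R ∧ Finite M.World ∧ Nat.card M.World ≤ mdep φ + 1 ∧
      ∃ w, Sat M φ w :=
  stmt0_general φ hsat

end PoorMansModal
end

section
/- Let φ = □ψ₁ ∧ ⋯ ∧ □ψ_k ∧ ◇ξ₁ ∧ ⋯ ∧ ◇ξ_m ∧ ℓ₁ ∧ ⋯ ∧ ℓ_s be a poor man's formula, where the ℓ_i are literals. Then φ is satisfiable with respect to F≤1 if and only if (1) for all i and j, ℓ_i is not the complement of ℓ_j, and (2) either m = 0, or the conjunction ψ₁ ∧ ⋯ ∧ ψ_k ∧ ξ₁ ∧ ⋯ ∧ ξ_m is satisfiable with respect to F≤1. -/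
namespace PoorMansModal

/-! On frames with at most one successor, `□ψ ∧ ◇ξ` at `w` forces `ψ ∧ ξ` at the unique
successor of `w`, so the boxed and diamonded formulas all hold at one world. Conversely, a
model of `⋀ψᵢ ∧ ⋀ξⱼ` at `v` (or no successor at all when `m = 0`) gets a fresh root whose only
successor is `v` and whose valuation reads off the literals; consistency of the literals is
exactly what that valuation needs. -/

def LitConsistent {α : Type} (ls : List (α × Bool)) : Prop :=
  ∀ l ∈ ls, ∀ l' ∈ ls, ¬ (l.1 = l'.1 ∧ l.2 = !l'.2)

theorem sat_bigConj {α : Type} (M : Kripke α) (w : M.World) :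
    ∀ L : List (Fml α), Sat M (bigConj L) w ↔ ∀ φ ∈ L, Sat M φ w
  | [] => by simp [bigConj, Sat]
  | [φ] => by simp [bigConj]
  | φ :: ψ :: rest => by
      simp only [bigConj, Sat, sat_bigConj M w (ψ :: rest), List.forall_mem_cons]

theorem sat_litF {α : Type} (M : Kripke α) (l : α × Bool) (w : M.World) :
    Sat M (litF l) w ↔ (M.V l.1 w ↔ l.2 = true) := by
  obtain ⟨p, _ | _⟩ := l <;> simp [litF, Sat]

theorem sat_bigConj_boxes_dias_lits {α : Type} (M : Kripke α) (w : M.World)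
    (ψs ξs : List (Fml α)) (ls : List (α × Bool)) :
    Sat M (bigConj (ψs.map .box ++ ξs.map .dia ++ ls.map litF)) w ↔
      (∀ ψ ∈ ψs, Sat M (.box ψ) w) ∧ (∀ ξ ∈ ξs, Sat M (.dia ξ) w) ∧
        ∀ l ∈ ls, Sat M (litF l) w := by
  simp only [sat_bigConj, List.forall_mem_append, List.forall_mem_map, and_assoc]

theorem LitConsistent.of_sat {α : Type} {M : Kripke α} {w : M.World} {ls : List (α × Bool)}
    (h : ∀ l ∈ ls, Sat M (litF l) w) : LitConsistent ls := by
  rintro ⟨p, b⟩ hl ⟨_, b'⟩ hl' ⟨rfl, hb⟩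
  obtain rfl : b = !b' := hb
  have h₁ := (sat_litF M _ w).mp (h _ hl)
  have h₂ := (sat_litF M _ w).mp (h _ hl')
  cases b' <;> simp_all

theorem LitConsistent.sat_litF {α : Type} {M : Kripke α} {w : M.World}
    {ls : List (α × Bool)} (hls : LitConsistent ls) (hV : ∀ p, M.V p w ↔ (p, true) ∈ ls) :
    ∀ l ∈ ls, Sat M (litF l) w := by
  rintro ⟨p, b⟩ hl
  rw [PoorMansModal.sat_litF, hV]
  cases b
  · simpa using fun hp : (p, true) ∈ ls => hls _ hl _ hp ⟨rfl, rfl⟩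
  · simpa using hl

theorem exists_sat_of_sat_box_dia {α : Type} {M : Kripke α} (hM : AtMostOne M.R)
    {w : M.World} {ψs ξs : List (Fml α)} (hψ : ∀ ψ ∈ ψs, Sat M (.box ψ) w)
    (hξ : ∀ ξ ∈ ξs, Sat M (.dia ξ) w) (hne : ξs ≠ []) :
    ∃ u, ∀ φ ∈ ψs ++ ξs, Sat M φ u := by
  obtain ⟨ξ, hξmem⟩ := List.exists_mem_of_ne_nil ξs hne
  obtain ⟨u, hwu, -⟩ := hξ ξ hξmem
  refine ⟨u, List.forall_mem_append.mpr ⟨fun ψ hψmem => hψ ψ hψmem u hwu, ?_⟩⟩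
  intro ξ' hξ'mem
  obtain ⟨u', hwu', hu'⟩ := hξ ξ' hξ'mem
  rwa [hM w u' u hwu' hwu] at hu'

def Kripke.addRoot {α : Type} (M : Kripke α) (S : M.World → Prop) (val : α → Prop) :
    Kripke α where
  World := Option M.World
  nonempty := ⟨none⟩
  R
    | none, some b => S b
    | some a, some b => M.R a b
    | _, none => False
  V
    | p, none => val p
    | p, some a => M.V p a

namespace Kripke

variable {α : Type} (M : Kripke α) (S : M.World → Prop) (val : α → Prop)

theorem sat_addRoot_some (φ : Fml α) (a : M.World) :
    Sat (M.addRoot S val) φ (some a) ↔ Sat M φ a := by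
  induction φ generalizing a with
  | var | nvar | tru | fls => rfl
  | neg φ ih => exact not_congr (ih a)
  | and φ ψ ih₁ ih₂ => exact and_congr (ih₁ a) (ih₂ a)
  | or φ ψ ih₁ ih₂ => exact or_congr (ih₁ a) (ih₂ a)
  | box φ ih =>
      refine ⟨fun h b hb => (ih b).mp (h (some b) hb), ?_⟩
      rintro h (_ | b) hb
      exacts [(hb : False).elim, (ih b).mpr (h b hb)]
  | dia φ ih =>
      refine ⟨?_, fun ⟨b, hb, hφ⟩ => ⟨some b, hb, (ih b).mpr hφ⟩⟩
      rintro ⟨_ | b, hb, hφ⟩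
      exacts [(hb : False).elim, ⟨b, hb, (ih b).mp hφ⟩]

theorem sat_addRoot_box (φ : Fml α) :
    Sat (M.addRoot S val) (.box φ) none ↔ ∀ b, S b → Sat M φ b := by
  refine ⟨fun h b hb => (M.sat_addRoot_some S val φ b).mp (h (some b) hb), ?_⟩
  rintro h (_ | b) hb
  exacts [(hb : False).elim, (M.sat_addRoot_some S val φ b).mpr (h b hb)]

theorem sat_addRoot_dia (φ : Fml α) :
    Sat (M.addRoot S val) (.dia φ) none ↔ ∃ b, S b ∧ Sat M φ b := by
  refine ⟨?_, fun ⟨b, hb, hφ⟩ => ⟨some b, hb, (M.sat_addRoot_some S val φ b).mpr hφ⟩⟩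
  rintro ⟨_ | b, hb, hφ⟩
  exacts [(hb : False).elim, ⟨b, hb, (M.sat_addRoot_some S val φ b).mp hφ⟩]

variable {M S}

theorem atMostOne_addRoot (hM : AtMostOne M.R) (hS : ∀ b b', S b → S b' → b = b') :
    AtMostOne (M.addRoot S val).R := by
  rintro (_ | a) (_ | b) (_ | b') hb hb' <;> first
    | exact (hb : False).elim | exact (hb' : False).elim
    | exact congrArg some (hS b b' hb hb') | exact congrArg some (hM a b b' hb hb')

end Kripke

theorem satLe1_of_addRoot {M : Kripke ℕ} (hM : AtMostOne M.R) {S : M.World → Prop}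
    (hS : ∀ b b', S b → S b' → b = b') {ψs ξs : List (Fml ℕ)} {ls : List (ℕ × Bool)}
    (hψ : ∀ ψ ∈ ψs, ∀ b, S b → Sat M ψ b) (hξ : ∀ ξ ∈ ξs, ∃ b, S b ∧ Sat M ξ b)
    (hls : LitConsistent ls) :
    SatLe1 (bigConj (ψs.map .box ++ ξs.map .dia ++ ls.map litF)) := by
  refine ⟨M.addRoot S (fun p => (p, true) ∈ ls), M.atMostOne_addRoot _ hM hS, none,
    (sat_bigConj_boxes_dias_lits (M.addRoot S _) none ψs ξs ls).mpr ⟨?_, ?_, ?_⟩⟩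
  · exact fun ψ hψmem => (M.sat_addRoot_box S _ ψ).mpr (hψ ψ hψmem)
  · exact fun ξ hξmem => (M.sat_addRoot_dia S _ ξ).mpr (hξ ξ hξmem)
  · exact hls.sat_litF fun _ => Iff.rfl

theorem stmt1_general (ψs ξs : List (Fml ℕ)) (ls : List (ℕ × Bool)) :
    SatLe1 (bigConj (ψs.map .box ++ ξs.map .dia ++ ls.map litF)) ↔
      ((∀ l ∈ ls, ∀ l' ∈ ls, ¬ (l.1 = l'.1 ∧ l.2 = !l'.2)) ∧
        (ξs = [] ∨ SatLe1 (bigConj (ψs ++ ξs)))) := by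
  constructor
  · rintro ⟨M, hM, w, hw⟩
    obtain ⟨hψ, hξ, hls⟩ := (sat_bigConj_boxes_dias_lits M w ψs ξs ls).mp hw
    refine ⟨LitConsistent.of_sat hls, or_iff_not_imp_left.mpr fun hne => ?_⟩
    obtain ⟨u, hu⟩ := exists_sat_of_sat_box_dia hM hψ hξ hne
    exact ⟨M, hM, u, (sat_bigConj M u _).mpr hu⟩
  · rintro ⟨hls, rfl | ⟨M, hM, v, hv⟩⟩
    · -- a root without successors satisfies every `□ψ`
      exact satLe1_of_addRoot (M := propModel fun _ => false) (fun _ _ _ h => (h : False).elim)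
        (S := fun _ => False) (fun _ _ => False.elim) (fun _ _ _ => False.elim)
        (fun _ h => (List.not_mem_nil h).elim) hls
    · have hv := (sat_bigConj M v _).mp hv
      exact satLe1_of_addRoot hM (S := (· = v)) (fun _ _ h h' => h.trans h'.symm)
        (fun ψ hψmem _ hb => hb ▸ hv ψ (List.mem_append_left _ hψmem))
        (fun ξ hξmem => ⟨v, rfl, hv ξ (List.mem_append_right _ hξmem)⟩) hls

/-- A poor man's formula
`φ = □ψ₁ ∧ ⋯ ∧ □ψ_k ∧ ◇ξ₁ ∧ ⋯ ∧ ◇ξ_m ∧ ℓ₁ ∧ ⋯ ∧ ℓ_s` is satisfiable with respect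
to `F≤1` iff no literal `ℓ_i` is the complement of a literal `ℓ_j`, and either `m = 0`
or `ψ₁ ∧ ⋯ ∧ ψ_k ∧ ξ₁ ∧ ⋯ ∧ ξ_m` is satisfiable with respect to `F≤1`. -/
theorem stmt1 (ψs ξs : List (Fml ℕ)) (ls : List (ℕ × Bool))
    (hψ : ∀ ψ ∈ ψs, PoorF ψ) (hξ : ∀ ξ ∈ ξs, PoorF ξ) :
    SatLe1 (bigConj (ψs.map .box ++ ξs.map .dia ++ ls.map litF)) ↔
      ((∀ l ∈ ls, ∀ l' ∈ ls, ¬ (l.1 = l'.1 ∧ l.2 = !l'.2)) ∧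
        (ξs = [] ∨ SatLe1 (bigConj (ψs ++ ξs)))) :=
  stmt1_general ψs ξs ls

end PoorMansModal
end

section
/- An L formula φ is satisfiable with respect to F≤2 if and only if φ is satisfied at the root of some model based on a binary tree, i.e., a frame whose accessibility relation is the parent-child relation of a rooted tree in which every node has at most two children. -/
namespace PoorMansModal

/-! The unraveling of a model at a world `w` is again a model, its worlds being the finite
`R`-paths starting at `w`, a path being a child of the path it extends by one step.
Sending a path to its endpoint is a bounded morphism onto the original model, so it
preserves the truth of every formula, and the unraveling is a tree in which each path
has at most as many children as its endpoint has successors. -/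

theorem AtMostTwo.of_map {W' W : Type} {R' : W' → W' → Prop} {R : W → W → Prop}
    (hR : AtMostTwo R) (f : W' → W) (hf : ∀ a b, R' a b → R (f a) (f b))
    (hinj : ∀ a b c, R' a b → R' a c → f b = f c → b = c) : AtMostTwo R' := by
  intro a b₁ b₂ b₃ h₁ h₂ h₃
  rcases hR _ _ _ _ (hf _ _ h₁) (hf _ _ h₂) (hf _ _ h₃) with h | h | h
  · exact .inl (hinj _ _ _ h₁ h₂ h)
  · exact .inr (.inl (hinj _ _ _ h₁ h₃ h))
  · exact .inr (.inr (hinj _ _ _ h₂ h₃ h))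

structure IsBoundedMorphism {α : Type} (M N : Kripke α) (f : M.World → N.World) : Prop where
  val_iff : ∀ p w, M.V p w ↔ N.V p (f w)
  forth : ∀ ⦃w v⦄, M.R w v → N.R (f w) (f v)
  back : ∀ ⦃w v⦄, N.R (f w) v → ∃ u, M.R w u ∧ f u = v

theorem IsBoundedMorphism.sat_iff {α : Type} {M N : Kripke α} {f : M.World → N.World}
    (hf : IsBoundedMorphism M N f) (φ : Fml α) (w : M.World) :
    Sat M φ w ↔ Sat N φ (f w) := by
  induction φ generalizing w with
  | var p => exact hf.val_iff p w
  | nvar p => exact not_congr (hf.val_iff p w)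
  | neg φ ih => exact not_congr (ih w)
  | and φ ψ ihφ ihψ => exact and_congr (ihφ w) (ihψ w)
  | or φ ψ ihφ ihψ => exact or_congr (ihφ w) (ihψ w)
  | box φ ih =>
    refine ⟨fun h v hv => ?_, fun h u hu => (ih u).2 (h _ (hf.forth hu))⟩
    obtain ⟨u, hu, rfl⟩ := hf.back hv
    exact (ih u).1 (h u hu)
  | dia φ ih =>
    refine ⟨fun ⟨u, hu, h⟩ => ⟨f u, hf.forth hu, (ih u).1 h⟩, fun ⟨v, hv, h⟩ => ?_⟩
    obtain ⟨u, hu, rfl⟩ := hf.back hv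
    exact ⟨u, hu, (ih u).2 h⟩
  | tru => exact Iff.rfl
  | fls => exact Iff.rfl

/-- An `R`-path from `root`, stored backwards: `last` is its endpoint and `trail` lists the
earlier worlds, most recent first. -/
@[ext]
structure Path {W : Type} (R : W → W → Prop) (root : W) where
  last : W
  trail : List W
  isChain : (last :: trail).IsChain (fun a b => R b a)
  getLast_eq : (last :: trail).getLast (List.cons_ne_nil _ _) = root

namespace Path

variable {W : Type} {R : W → W → Prop} {root : W}

variable (R root) in
def nil : Path R root := ⟨root, [], .singleton _, rfl⟩

def extend (p : Path R root) (v : W) (h : R p.last v) : Path R root where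
  last := v
  trail := p.last :: p.trail
  isChain := .cons_cons h p.isChain
  getLast_eq := by rw [List.getLast_cons_cons, p.getLast_eq]

def Child (p q : Path R root) : Prop := q.trail = p.last :: p.trail

theorem Child.rel_last {p q : Path R root} (h : Child p q) : R p.last q.last := by
  have := q.isChain
  rw [h, List.isChain_cons_cons] at this
  exact this.1

theorem child_extend (p : Path R root) (v : W) (h : R p.last v) : Child p (p.extend v h) := rfl

theorem Child.trail_length {p q : Path R root} (h : Child p q) :
    q.trail.length = p.trail.length + 1 := by
  rw [h, List.length_cons]

theorem Child.eq_of_last_eq {p q q' : Path R root} (h : Child p q) (h' : Child p q')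
    (hlast : q.last = q'.last) : q = q' :=
  Path.ext hlast (h.trans h'.symm)

theorem Child.parent_unique {p p' q : Path R root} (h : Child p q) (h' : Child p' q) :
    p = p' := by
  obtain ⟨hlast, htrail⟩ := List.cons_eq_cons.mp (h.symm.trans h')
  exact Path.ext hlast htrail

theorem not_child_nil (p : Path R root) : ¬ Child p (nil R root) :=
  List.cons_ne_nil _ _ ∘ Eq.symm

theorem reflTransGen_child_nil (p : Path R root) :
    Relation.ReflTransGen Child (nil R root) p := by
  obtain ⟨v, trail, hchain, hlast⟩ := p
  induction trail generalizing v with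
  | nil =>
    subst hlast
    exact .refl
  | cons u trail ih =>
    rw [List.isChain_cons_cons] at hchain
    rw [List.getLast_cons_cons] at hlast
    exact .tail (ih u hchain.2 hlast) rfl

theorem trail_length_lt_of_transGen {p q : Path R root}
    (h : Relation.TransGen Child p q) : p.trail.length < q.trail.length := by
  induction h with
  | single h => have := h.trail_length; omega
  | tail _ h ih => have := h.trail_length; omega

theorem isBinTree (hR : AtMostTwo R) : IsBinTree (@Child W R root) (nil R root) where
  reach := reflTransGen_child_nil
  root_no_parent := not_child_nil
  unique_parent _ _ _ h h' := h.parent_unique h'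
  acyclic _ h := (trail_length_lt_of_transGen h).false
  at_most_two_children :=
    hR.of_map last (fun _ _ h => h.rel_last) fun _ _ _ h h' => h.eq_of_last_eq h'

end Path

def Kripke.unravel {α : Type} (M : Kripke α) (w : M.World) : Kripke α where
  World := Path M.R w
  nonempty := ⟨Path.nil M.R w⟩
  R := Path.Child
  V p q := M.V p q.last

theorem Kripke.isBoundedMorphism_unravel_last {α : Type} (M : Kripke α) (w : M.World) :
    IsBoundedMorphism (M.unravel w) M Path.last where
  val_iff _ _ := Iff.rfl
  forth _ _ h := h.rel_last
  back p v h := ⟨p.extend v h, Path.child_extend p v h, rfl⟩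

theorem stmt9_general (φ : Fml ℕ) :
    SatLe2 φ ↔
      ∃ (M : Kripke ℕ) (r : M.World), IsBinTree M.R r ∧ Sat M φ r := by
  constructor
  · rintro ⟨M, hM, w, hw⟩
    exact ⟨M.unravel w, Path.nil M.R w, Path.isBinTree hM,
      ((M.isBoundedMorphism_unravel_last w).sat_iff φ _).2 hw⟩
  · rintro ⟨M, r, hM, hr⟩
    exact ⟨M, hM.at_most_two_children, r, hr⟩

/-- An `L` formula is satisfiable with respect to `F≤2` iff it is satisfied
at the root of some model based on a binary tree (the parent-child relation of a rooted
tree in which every node has at most two children). -/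
theorem stmt9 (φ : Fml ℕ) (hφ : InL φ) :
    SatLe2 φ ↔
      ∃ (M : Kripke ℕ) (r : M.World), IsBinTree M.R r ∧ Sat M φ r :=
  stmt9_general φ

end PoorMansModal
end

section
/- For n ≥ 1 let φ_exp = ⋀_{i=1}^n □^{i-1}(◇□^{n-i} p_i ∧ ◇□^{n-i} p̄_i). If M is a model based on a binary tree with root r and M,r ⊨ φ_exp, then the worlds of depth at most n form a complete binary tree of depth n (every world of depth < n has exactly two children), and for every truth assignment α : {1,…,n} → {true, false} there is exactly one world w at depth n such that for all i, M,w ⊨ p_i if and only if α(i) = true. -/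
namespace PoorMansModal

/-!
Reading `φ_exp` layer by layer, every world `u` at depth `j < n` has a child `c b` with
`c b ⊨ □^{n-1-j} p_{j+1}` if `b` is true and `c b ⊨ □^{n-1-j} p̄_{j+1}` otherwise. Since the
diamonds also give every world above depth `n` a path down to depth `n`, the children `c true`
and `c false` differ, so in a binary tree they are all the children of `u`. Descending by
`c (α 1), c (α 2), …` reaches a world realizing `α`; two distinct worlds at depth `n` branch
apart at some `u` at depth `j`, one through `c true` and one through `c false`, so they
disagree on `p_{j+1}`.
-/

section Kripke

variable {α : Type} (M : Kripke α)

lemma sat_bigConj_iff (w : M.World) :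
    ∀ L : List (Fml α), Sat M (bigConj L) w ↔ ∀ φ ∈ L, Sat M φ w
  | [] => by simp [bigConj, Sat]
  | [φ] => by simp [bigConj]
  | φ :: ψ :: L => by
      rw [List.forall_mem_cons, ← sat_bigConj_iff w (ψ :: L)]
      rfl

lemma sat_boxI_iff (φ : Fml α) :
    ∀ (k : ℕ) (w : M.World), Sat M (boxI k φ) w ↔ ∀ v, chainR M.R k w v → Sat M φ v
  | 0, w => by simp [boxI, chainR]
  | k + 1, w => by
      simp only [boxI, Sat, chainR, sat_boxI_iff φ k]
      grind

lemma sat_litF_iff (p : α) (b : Bool) (w : M.World) :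
    Sat M (litF (p, b)) w ↔ (M.V p w ↔ b = true) := by
  cases b <;> simp [litF, Sat]

end Kripke

section chainR

variable {W : Type} (R : W → W → Prop)

lemma chainR_succ_of_chainR :
    ∀ {k : ℕ} {w u v : W}, chainR R k w u → R u v → chainR R (k + 1) w v
  | 0, _, _, v, rfl, huv => ⟨v, huv, rfl⟩
  | _ + 1, _, _, _, ⟨x, hwx, hxu⟩, huv => ⟨x, hwx, chainR_succ_of_chainR hxu huv⟩

lemma chainR_branch_of_ne :
    ∀ {k : ℕ} {s w w' : W}, chainR R k s w → chainR R k s w' → w ≠ w' →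
      ∃ j u v v', j < k ∧ chainR R j s u ∧ R u v ∧ R u v' ∧ v ≠ v' ∧
        chainR R (k - 1 - j) v w ∧ chainR R (k - 1 - j) v' w'
  | 0, _, _, _, rfl, rfl, hne => absurd rfl hne
  | k + 1, s, w, w', ⟨a, hsa, haw⟩, ⟨a', hsa', haw'⟩, hne => by
      by_cases ha : a = a'
      · subst ha
        obtain ⟨j, u, v, v', hj, hau, huv, huv', hvv', hvw, hvw'⟩ :=
          chainR_branch_of_ne haw haw' hne
        have hk : k + 1 - 1 - (j + 1) = k - 1 - j := by omega
        exact ⟨j + 1, u, v, v', by omega, ⟨a, hsa, hau⟩, huv, huv', hvv', hk ▸ hvw, hk ▸ hvw'⟩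
      · exact ⟨0, s, a, a', by omega, rfl, hsa, hsa', ha, by simpa using haw, by simpa using haw'⟩

end chainR

section phiExp

variable {n : ℕ} {M : Kripke ℕ} {r : M.World}

lemma exists_child_sat_boxI_litF (h : Sat M (phiExp n) r) {j : ℕ} (hj : j < n) {u : M.World}
    (hu : chainR M.R j r u) (b : Bool) :
    ∃ v, M.R u v ∧ Sat M (boxI (n - 1 - j) (litF (j + 1, b))) v := by
  have hlayer := (sat_bigConj_iff M r _).1 h _ (List.mem_map_of_mem (List.mem_range.2 hj))
  obtain ⟨hpos, hneg⟩ := (sat_boxI_iff M _ j r).1 hlayer u hu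
  cases b
  exacts [hneg, hpos]

lemma exists_chainR_of_sat_phiExp (h : Sat M (phiExp n) r) :
    ∀ {m j : ℕ}, j + m ≤ n → ∀ {u : M.World}, chainR M.R j r u → ∃ z, chainR M.R m u z
  | 0, _, _, u, _ => ⟨u, rfl⟩
  | m + 1, j, hjm, u, hu => by
      obtain ⟨v, huv, -⟩ := exists_child_sat_boxI_litF h (by omega) hu true
      obtain ⟨z, hvz⟩ :=
        exists_chainR_of_sat_phiExp h (m := m) (j := j + 1) (by omega)
          (chainR_succ_of_chainR M.R hu huv)
      exact ⟨z, v, huv, hvz⟩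

lemma exists_two_children (h : Sat M (phiExp n) r) (hR : AtMostTwo M.R) {j : ℕ} (hj : j < n)
    {u : M.World} (hu : chainR M.R j r u) :
    ∃ v₁ v₂, v₁ ≠ v₂ ∧ M.R u v₁ ∧ M.R u v₂ ∧ (∀ v, M.R u v → v = v₁ ∨ v = v₂) ∧
      Sat M (boxI (n - 1 - j) (litF (j + 1, true))) v₁ ∧
      Sat M (boxI (n - 1 - j) (litF (j + 1, false))) v₂ := by
  obtain ⟨v₁, huv₁, hv₁⟩ := exists_child_sat_boxI_litF h hj hu true
  obtain ⟨v₂, huv₂, hv₂⟩ := exists_child_sat_boxI_litF h hj hu false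
  have hne : v₁ ≠ v₂ := by
    rintro rfl
    obtain ⟨z, hz⟩ :=
      exists_chainR_of_sat_phiExp h (m := n - 1 - j) (j := j + 1) (by omega)
        (chainR_succ_of_chainR M.R hu huv₁)
    have hpos := (sat_litF_iff M _ _ z).1 ((sat_boxI_iff M _ _ v₁).1 hv₁ z hz)
    have hneg := (sat_litF_iff M _ _ z).1 ((sat_boxI_iff M _ _ v₁).1 hv₂ z hz)
    simp_all
  refine ⟨v₁, v₂, hne, huv₁, huv₂, fun v huv => ?_, hv₁, hv₂⟩
  rcases hR u v v₁ v₂ huv huv₁ huv₂ with h₁ | h₂ | h₁₂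
  exacts [Or.inl h₁, Or.inr h₂, absurd h₁₂ hne]

lemma eq_of_chainR_of_V_iff (h : Sat M (phiExp n) r) (hR : AtMostTwo M.R) {j : ℕ} (hj : j < n)
    {u x x' z z' : M.World} (hu : chainR M.R j r u) (hx : M.R u x) (hx' : M.R u x')
    (hz : chainR M.R (n - 1 - j) x z) (hz' : chainR M.R (n - 1 - j) x' z')
    (hV : M.V (j + 1) z ↔ M.V (j + 1) z') : x = x' := by
  obtain ⟨v₁, v₂, -, -, -, hchildren, hv₁, hv₂⟩ := exists_two_children h hR hj hu
  have hval : ∀ {y w b}, y = v₁ ∨ y = v₂ → chainR M.R (n - 1 - j) y w →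
      Sat M (boxI (n - 1 - j) (litF (j + 1, b))) y → (M.V (j + 1) w ↔ b = true) :=
    fun _ hyw hy => (sat_litF_iff M _ _ _).1 ((sat_boxI_iff M _ _ _).1 hy _ hyw)
  rcases hchildren x hx with rfl | rfl <;> rcases hchildren x' hx' with rfl | rfl
  · rfl
  · simp [hval (Or.inl rfl) hz hv₁, hval (Or.inr rfl) hz' hv₂] at hV
  · simp [hval (Or.inr rfl) hz hv₂, hval (Or.inl rfl) hz' hv₁] at hV
  · rfl

lemma exists_chainR_sat_boxI_litF (h : Sat M (phiExp n) r) (a : ℕ → Bool) :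
    ∀ j ≤ n, ∃ w, chainR M.R j r w ∧
      ∀ i, 1 ≤ i → i ≤ j → Sat M (boxI (n - j) (litF (i, a i))) w
  | 0, _ => ⟨r, rfl, fun _ _ _ => by omega⟩
  | j + 1, hj => by
      obtain ⟨w, hw, hsat⟩ := exists_chainR_sat_boxI_litF h a j (by omega)
      obtain ⟨v, hwv, hv⟩ := exists_child_sat_boxI_litF h hj hw (a (j + 1))
      have hnj : n - j = n - (j + 1) + 1 := by omega
      refine ⟨v, chainR_succ_of_chainR M.R hw hwv, fun i hi hij => ?_⟩
      rcases Nat.lt_or_ge i (j + 1) with hlt | hge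
      · exact (hnj ▸ hsat i hi (by omega)) v hwv
      · obtain rfl : i = j + 1 := by omega
        rwa [show n - (j + 1) = n - 1 - j by omega]

lemma exists_chainR_realizing (h : Sat M (phiExp n) r) (a : ℕ → Bool) :
    ∃ w, chainR M.R n r w ∧ ∀ i, 1 ≤ i → i ≤ n → (M.V i w ↔ a i = true) := by
  obtain ⟨w, hw, hsat⟩ := exists_chainR_sat_boxI_litF h a n le_rfl
  refine ⟨w, hw, fun i hi hin => (sat_litF_iff M _ _ w).1 ?_⟩
  simpa [boxI] using hsat i hi hin

lemma eq_of_chainR_of_forall_V_iff (h : Sat M (phiExp n) r) (hR : AtMostTwo M.R)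
    {w w' : M.World} (hw : chainR M.R n r w) (hw' : chainR M.R n r w')
    (hV : ∀ i, 1 ≤ i → i ≤ n → (M.V i w ↔ M.V i w')) : w = w' := by
  by_contra hne
  obtain ⟨j, u, v, v', hj, hu, huv, huv', hvv', hvw, hvw'⟩ :=
    chainR_branch_of_ne M.R hw hw' hne
  exact hvv' (eq_of_chainR_of_V_iff h hR hj hu huv huv' hvw hvw' (hV (j + 1) (by omega) hj))

end phiExp

theorem stmt10_general (n : ℕ) (M : Kripke ℕ) (r : M.World)
    (htree : IsBinTree M.R r) (h : Sat M (phiExp n) r) :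
    (∀ k, k < n → ∀ w, chainR M.R k r w →
        ∃ v₁ v₂, v₁ ≠ v₂ ∧ M.R w v₁ ∧ M.R w v₂ ∧ ∀ v, M.R w v → v = v₁ ∨ v = v₂) ∧
    (∀ α : ℕ → Bool,
        ∃! w, chainR M.R n r w ∧ ∀ i, 1 ≤ i → i ≤ n → (M.V i w ↔ α i = true)) := by
  have hR : AtMostTwo M.R := htree.at_most_two_children
  refine ⟨fun k hk w hw => ?_, fun α => ?_⟩
  · obtain ⟨v₁, v₂, hne, h₁, h₂, hchildren, -⟩ := exists_two_children h hR hk hw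
    exact ⟨v₁, v₂, hne, h₁, h₂, hchildren⟩
  · obtain ⟨w, hw, hα⟩ := exists_chainR_realizing h α
    refine ⟨w, ⟨hw, hα⟩, fun w' ⟨hw', hα'⟩ => ?_⟩
    exact eq_of_chainR_of_forall_V_iff h hR hw' hw fun i hi hin =>
      (hα' i hi hin).trans (hα i hi hin).symm

/-- If `M` is a model based on a binary tree with root `r` and
`M, r ⊨ φ_exp`, then every world of depth `< n` has exactly two children, and for every
truth assignment `α` to `p₁, …, p_n` there is exactly one world at depth `n`
realizing `α`. -/
theorem stmt10 (n : ℕ) (hn : 1 ≤ n) (M : Kripke ℕ) (r : M.World)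
    (htree : IsBinTree M.R r) (h : Sat M (phiExp n) r) :
    (∀ k, k < n → ∀ w, chainR M.R k r w →
        ∃ v₁ v₂, v₁ ≠ v₂ ∧ M.R w v₁ ∧ M.R w v₂ ∧ ∀ v, M.R w v → v = v₁ ∨ v = v₂) ∧
    (∀ α : ℕ → Bool,
        ∃! w, chainR M.R n r w ∧ ∀ i, 1 ≤ i → i ≤ n → (M.V i w ↔ α i = true)) :=
  stmt10_general n M r htree h

end PoorMansModal
end
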